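/- Second discrete Frenet equation (inscribed case): for a discrete curve satisfying the positive-twist condition, for every i ∈ ℤ one has (DNᵉ)ᵢ = −κᵢ • Tᵛᵢ + τᵢ • Bᵛᵢ, where κᵢ := ‖(DTᵉ)ᵢ‖ and τᵢ := ‖(DBᵉ)ᵢ‖. -/

import Mathlib

open RealInnerProductSpace

noncomputable section

/-- Points of a discrete curve live in `ℝ³` with the Euclidean norm. -/
abbrev E3 := EuclideanSpace ℝ (Fin 3)

/-- The cross product on `ℝ³`. -/
def cross3 (u v : E3) : E3 :=
  WithLp.toLp 2 ![u 1 * v 2 - u 2 * v 1, u 2 * v 0 - u 0 * v 2, u 0 * v 1 - u 1 * v 0]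

/-!
At an even index the binormal is constant, so `(DNᵉ)ᵢ = Bᵉᵢ × (DTᵉ)ᵢ`; at an odd index the midpoint
condition makes the tangent constant, so `(DNᵉ)ᵢ = (DBᵉ)ᵢ × Tᵉᵢ`. Both are instances of one planar
fact: for unit vectors `a, b` orthogonal to a unit vector `n`, the vector `(a - b) × n` lies in the
plane `n⊥`, is orthogonal to `a - b` and has length `‖a - b‖`, so it is `± ‖a - b‖` times the unit
bisector `(a + b) / ‖a + b‖`. Its sign is that of `-⟪a, b × n⟫`, which is nonnegative by the
positive-twist condition at odd indices and by the definition of `Bᵉ` at even ones.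
-/

open Matrix

lemma cross3_eq_crossProduct (u v : E3) : cross3 u v = WithLp.toLp 2 (u.ofLp ⨯₃ v.ofLp) := rfl

lemma inner_eq_ofLp_dotProduct (x y : E3) : ⟪x, y⟫ = x.ofLp ⬝ᵥ y.ofLp := by
  rw [EuclideanSpace.inner_eq_star_dotProduct, star_trivial, dotProduct_comm]

lemma cross3_sub_left (a b c : E3) : cross3 (a - b) c = cross3 a c - cross3 b c := by
  simp [cross3_eq_crossProduct]

lemma cross3_sub_right (a b c : E3) : cross3 a (b - c) = cross3 a b - cross3 a c := by
  simp [cross3_eq_crossProduct]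

lemma cross3_anticomm (a b : E3) : cross3 b a = -cross3 a b := by
  rw [cross3_eq_crossProduct, cross3_eq_crossProduct, ← cross_anticomm, WithLp.toLp_neg]

lemma cross3_neg_right_self (a : E3) : cross3 a (-a) = 0 := by
  simp [cross3_eq_crossProduct, cross_self]

lemma inner_cross3_self_left (a b : E3) : ⟪a, cross3 a b⟫ = 0 := by
  simp [inner_eq_ofLp_dotProduct, cross3_eq_crossProduct, dot_self_cross]

lemma inner_cross3_self_right (a b : E3) : ⟪b, cross3 a b⟫ = 0 := by
  simp [inner_eq_ofLp_dotProduct, cross3_eq_crossProduct, dot_cross_self]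

lemma inner_cross3_comm (u v w : E3) : ⟪u, cross3 v w⟫ = ⟪v, cross3 w u⟫ := by
  simpa [inner_eq_ofLp_dotProduct, cross3_eq_crossProduct] using
    triple_product_permutation u.ofLp v.ofLp w.ofLp

lemma inner_cross3_cross3 (u v w x : E3) :
    ⟪cross3 u v, cross3 w x⟫ = ⟪u, w⟫ * ⟪v, x⟫ - ⟪u, x⟫ * ⟪v, w⟫ := by
  simpa [inner_eq_ofLp_dotProduct, cross3_eq_crossProduct] using
    cross_dot_cross u.ofLp v.ofLp w.ofLp x.ofLp

lemma cross3_cross3 (u v w : E3) : cross3 u (cross3 v w) = ⟪u, w⟫ • v - ⟪v, u⟫ • w := by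
  rw [cross3_eq_crossProduct, cross3_eq_crossProduct, WithLp.ofLp_toLp,
    cross_cross_eq_smul_sub_smul', inner_eq_ofLp_dotProduct, inner_eq_ofLp_dotProduct]
  rfl

lemma norm_cross3_sq (u v : E3) : ‖cross3 u v‖ ^ 2 = ‖u‖ ^ 2 * ‖v‖ ^ 2 - ⟪u, v⟫ ^ 2 := by
  rw [← real_inner_self_eq_norm_sq, inner_cross3_cross3, real_inner_self_eq_norm_sq,
    real_inner_self_eq_norm_sq, real_inner_comm v u]
  ring

lemma inner_cross3_sq_of_inner_eq_zero {a b n : E3} (ha : ⟪a, n⟫ = 0) (hb : ⟪b, n⟫ = 0) :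
    ⟪a, cross3 b n⟫ ^ 2 = ‖n‖ ^ 2 * (‖a‖ ^ 2 * ‖b‖ ^ 2 - ⟪a, b⟫ ^ 2) := by
  -- compute `‖a × (b × n)‖²` twice: directly, and from `a × (b × n) = -⟪a, b⟫ • n`
  have h := norm_cross3_sq a (cross3 b n)
  rw [cross3_cross3, ha, zero_smul, zero_sub, norm_neg, norm_smul, norm_cross3_sq, hb,
    Real.norm_eq_abs, mul_pow, sq_abs, real_inner_comm a b] at h
  linear_combination h

lemma inner_cross3_sub_add (a b n : E3) :
    ⟪cross3 (a - b) n, a + b⟫ = -2 * ⟪a, cross3 b n⟫ := by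
  have hab : ⟪cross3 a n, b⟫ = -⟪a, cross3 b n⟫ := by
    rw [real_inner_comm, inner_cross3_comm, cross3_anticomm, inner_neg_right]
  rw [cross3_sub_left, inner_sub_left, inner_add_right, inner_add_right, hab,
    real_inner_comm a, real_inner_comm b (cross3 b n), inner_cross3_self_left,
    real_inner_comm (cross3 b n), inner_cross3_self_left]
  ring

lemma eq_of_norm_eq_of_inner_eq_norm_mul_norm {F : Type*} [NormedAddCommGroup F]
    [InnerProductSpace ℝ F] {x y : F} (hn : ‖x‖ = ‖y‖) (hi : ⟪x, y⟫ = ‖x‖ * ‖y‖) : x = y := by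
  rw [← sub_eq_zero, ← norm_eq_zero, ← sq_eq_zero_iff, norm_sub_sq_real, hi, hn]
  ring

lemma cross3_sub_eq_of_inner_cross3_nonpos {a b n : E3} (ha : ‖a‖ = 1) (hb : ‖b‖ = 1)
    (hn : ‖n‖ = 1) (han : ⟪a, n⟫ = 0) (hbn : ⟪b, n⟫ = 0) (htwist : ⟪a, cross3 b n⟫ ≤ 0)
    (hab : a + b ≠ 0) :
    cross3 (a - b) n = ‖a - b‖ • (‖a + b‖⁻¹ • (a + b)) := by
  have hv : ‖a + b‖ ≠ 0 := norm_ne_zero_iff.mpr hab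
  have hlhs : ‖cross3 (a - b) n‖ = ‖a - b‖ := by
    rw [← sq_eq_sq₀ (norm_nonneg _) (norm_nonneg _), norm_cross3_sq, inner_sub_left, han, hbn,
      hn]
    ring
  have hrhs : ‖‖a - b‖ • (‖a + b‖⁻¹ • (a + b))‖ = ‖a - b‖ := by
    rw [norm_smul, norm_smul, norm_inv, norm_norm, norm_norm, inv_mul_cancel₀ hv, mul_one]
  have hprod : ‖a - b‖ * ‖a + b‖ = -2 * ⟪a, cross3 b n⟫ := by
    rw [← sq_eq_sq₀ (by positivity) (by linarith), mul_pow, mul_pow, norm_sub_sq_real,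
      norm_add_sq_real, inner_cross3_sq_of_inner_eq_zero han hbn, ha, hb, hn]
    ring
  apply eq_of_norm_eq_of_inner_eq_norm_mul_norm (hlhs.trans hrhs.symm)
  rw [hlhs, hrhs, real_inner_smul_right, real_inner_smul_right, inner_cross3_sub_add, ← hprod]
  field_simp

lemma cross3_normalized_cross3_sub {t t' : E3} (ht : ‖t‖ = 1) (ht' : ‖t'‖ = 1)
    (hX : cross3 t t' ≠ 0) :
    cross3 (‖cross3 t t'‖⁻¹ • cross3 t t') (t' - t)
      = -‖t' - t‖ • (‖t' + t‖⁻¹ • (t' + t)) := by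
  set B := ‖cross3 t t'‖⁻¹ • cross3 t t'
  have hB : ‖B‖ = 1 := norm_smul_inv_norm hX
  have htB : ⟪t, B⟫ = 0 := by rw [real_inner_smul_right, inner_cross3_self_left, mul_zero]
  have ht'B : ⟪t', B⟫ = 0 := by rw [real_inner_smul_right, inner_cross3_self_right, mul_zero]
  have htwist : ⟪t', cross3 t B⟫ ≤ 0 := by
    rw [inner_cross3_comm, inner_cross3_comm, cross3_anticomm, inner_neg_right,
      real_inner_smul_left, real_inner_self_eq_norm_sq, neg_nonpos]
    positivity
  have hsum : t' + t ≠ 0 := fun h ↦ hX <| by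
    rw [eq_neg_of_add_eq_zero_left h, cross3_neg_right_self]
  rw [cross3_anticomm (t' - t) B,
    cross3_sub_eq_of_inner_cross3_nonpos ht' ht hB ht'B htB htwist hsum, neg_smul]

lemma sub_eq_sub_of_eq_midpoint {V : Type*} [AddCommGroup V] [Module ℝ V] {p q r : V}
    (h : p = (2 : ℝ)⁻¹ • (q + r)) : q - p = p - r := by
  subst h
  module

theorem second_discrete_frenet_equation_general
    (γ T N B : ℤ → E3)
    (hlen : ∀ i : ℤ, ‖γ (i + 1) - γ i‖ = 1)
    (hmid : ∀ i : ℤ, Even i → γ i = (2 : ℝ)⁻¹ • (γ (i + 1) + γ (i - 1)))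
    (hT : ∀ i : ℤ, T i = γ (i + 1) - γ i)
    (hcross : ∀ i : ℤ, Even i → cross3 (T i) (T (i + 1)) ≠ 0)
    (hBeven : ∀ i : ℤ, Even i →
      B i = ‖cross3 (T i) (T (i + 1))‖⁻¹ • cross3 (T i) (T (i + 1)))
    (hBodd : ∀ i : ℤ, Odd i → B i = B (i - 1))
    (hN : ∀ i : ℤ, N i = cross3 (B i) (T i))
    (Tv Bv : ℤ → E3)
    (hMB : ∀ i : ℤ, B (i + 1) + B i ≠ 0)
    (hTv : ∀ i : ℤ, Tv i = ‖T (i + 1) + T i‖⁻¹ • (T (i + 1) + T i))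
    (hBv : ∀ i : ℤ, Bv i = ‖B (i + 1) + B i‖⁻¹ • (B (i + 1) + B i))
    (htwist : ∀ i : ℤ, Odd i → ⟪B (i + 1), N i⟫ ≤ 0)
    : ∀ i : ℤ,
      N (i + 1) - N i = -(‖T (i + 1) - T i‖) • Tv i + ‖B (i + 1) - B i‖ • Bv i := by
  intro i
  have hTunit (j : ℤ) : ‖T j‖ = 1 := by rw [hT]; exact hlen j
  have hBunit (j : ℤ) (hj : Even j) : ‖B j‖ = 1 := by
    rw [hBeven j hj]; exact norm_smul_inv_norm (hcross j hj)
  rcases Int.even_or_odd i with hi | hi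
  · have hB : B (i + 1) = B i := by simpa using hBodd (i + 1) hi.add_one
    rw [hN, hN, hB, ← cross3_sub_right, hBeven i hi,
      cross3_normalized_cross3_sub (hTunit i) (hTunit (i + 1)) (hcross i hi), hTv, sub_self,
      norm_zero, zero_smul, add_zero]
  · have hTi : T (i + 1) = T i := by
      simpa [← hT] using sub_eq_sub_of_eq_midpoint (hmid (i + 1) hi.add_one)
    have hBi : B i = ‖cross3 (T (i - 1)) (T i)‖⁻¹ • cross3 (T (i - 1)) (T i) := by
      rw [hBodd i hi]
      simpa using hBeven (i - 1) (hi.sub_odd odd_one)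
    have hBi1T : ⟪B (i + 1), T i⟫ = 0 := by
      rw [hBeven (i + 1) hi.add_one, real_inner_smul_left, ← hTi, real_inner_comm,
        inner_cross3_self_left, mul_zero]
    have hBiT : ⟪B i, T i⟫ = 0 := by
      rw [hBi, real_inner_smul_left, real_inner_comm, inner_cross3_self_right, mul_zero]
    rw [hN, hN, hTi, ← cross3_sub_left, hBv, sub_self, norm_zero, neg_zero, zero_smul, zero_add]
    exact cross3_sub_eq_of_inner_cross3_nonpos (hBunit _ hi.add_one)
      (hBodd i hi ▸ hBunit _ (hi.sub_odd odd_one)) (hTunit i) hBi1T hBiT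
      (hN i ▸ htwist i hi) (hMB i)

/-- Second discrete Frenet equation (inscribed case): under the positive-twist condition,
`(DNᵉ)ᵢ = −κᵢ • Tᵛᵢ + τᵢ • Bᵛᵢ` with `κᵢ = ‖(DTᵉ)ᵢ‖` and `τᵢ = ‖(DBᵉ)ᵢ‖`. -/
theorem second_discrete_frenet_equation
    (γ T N B : ℤ → E3)
    (hlen : ∀ i : ℤ, ‖γ (i + 1) - γ i‖ = 1)
    (hmid : ∀ i : ℤ, Even i → γ i = (2 : ℝ)⁻¹ • (γ (i + 1) + γ (i - 1)))
    (hT : ∀ i : ℤ, T i = γ (i + 1) - γ i)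
    (hcross : ∀ i : ℤ, Even i → cross3 (T i) (T (i + 1)) ≠ 0)
    (hBeven : ∀ i : ℤ, Even i →
      B i = ‖cross3 (T i) (T (i + 1))‖⁻¹ • cross3 (T i) (T (i + 1)))
    (hBodd : ∀ i : ℤ, Odd i → B i = B (i - 1))
    (hN : ∀ i : ℤ, N i = cross3 (B i) (T i))
    (Tv Nv Bv : ℤ → E3)
    (hMT : ∀ i : ℤ, T (i + 1) + T i ≠ 0)
    (hMN : ∀ i : ℤ, N (i + 1) + N i ≠ 0)
    (hMB : ∀ i : ℤ, B (i + 1) + B i ≠ 0)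
    (hTv : ∀ i : ℤ, Tv i = ‖T (i + 1) + T i‖⁻¹ • (T (i + 1) + T i))
    (hNv : ∀ i : ℤ, Nv i = ‖N (i + 1) + N i‖⁻¹ • (N (i + 1) + N i))
    (hBv : ∀ i : ℤ, Bv i = ‖B (i + 1) + B i‖⁻¹ • (B (i + 1) + B i))
    (htwist : ∀ i : ℤ, Odd i → ⟪B (i + 1), N i⟫ ≤ 0)
    : ∀ i : ℤ,
      N (i + 1) - N i = -(‖T (i + 1) - T i‖) • Tv i + ‖B (i + 1) - B i‖ • Bv i :=
  second_discrete_frenet_equation_general γ T N B hlen hmid hT hcross hBeven hBodd hN Tv Bv hMB hTv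
    hBv htwist
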